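/- arXiv:2111.13449 — 8 statements merged into one kernel-verified Lean document; each statement's English description precedes it below -/
import Mathlib

section
/- Let E be a relation on Fin n and let M be a perfect matching of the bipartite graph H(E). Then the set I* = {i : (inr i, inl i) ∈ M} of indices whose input is used equals the set J* = {i : (inl i, inr i) ∈ M} of indices whose output is used. Moreover, I* equals the set of indices i such that right vertex inl i is not matched by a dynamics edge, and J* equals the set of indices i such that left vertex inl i is not matched by a dynamics edge. -/
def IsBMatching {α β : Type*} (Adj : α → β → Prop) (M : Finset (α × β)) : Prop :=
  (∀ p ∈ M, Adj p.1 p.2) ∧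
  (∀ p ∈ M, ∀ q ∈ M, p.1 = q.1 → p = q) ∧
  (∀ p ∈ M, ∀ q ∈ M, p.2 = q.2 → p = q)

/-- Edge relation of the bipartite graph `H(E)` (the graph `B(D)` of the algorithm):
dynamics edges `(inl i, inl j)` iff `E i j`, plus `(inl i, inr i)`, `(inr i, inl i)`,
`(inr i, inr i)` for every `i`. -/
def HAdj {n : ℕ} (E : Fin n → Fin n → Prop) :
    (Fin n ⊕ Fin n) → (Fin n ⊕ Fin n) → Prop := fun a b =>
  match a, b with
  | Sum.inl i, Sum.inl j => E i j
  | Sum.inl i, Sum.inr j => i = j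
  | Sum.inr i, Sum.inl j => i = j
  | Sum.inr i, Sum.inr j => i = j

/-- A perfect matching of `H(E)`: a matching covering every left and right vertex. -/
def IsPerfectMatchingH {n : ℕ} (E : Fin n → Fin n → Prop)
    (M : Finset ((Fin n ⊕ Fin n) × (Fin n ⊕ Fin n))) : Prop :=
  IsBMatching (HAdj E) M ∧
  (∀ v : Fin n ⊕ Fin n, ∃ p ∈ M, p.1 = v) ∧
  (∀ v : Fin n ⊕ Fin n, ∃ p ∈ M, p.2 = v)

theorem stmt3 {n : ℕ} (E : Fin n → Fin n → Prop)
    (M : Finset ((Fin n ⊕ Fin n) × (Fin n ⊕ Fin n)))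
    (hM : IsPerfectMatchingH E M) :
    {i : Fin n | (Sum.inr i, Sum.inl i) ∈ M} = {i : Fin n | (Sum.inl i, Sum.inr i) ∈ M} ∧
    {i : Fin n | (Sum.inr i, Sum.inl i) ∈ M} =
      {i : Fin n | ¬ ∃ j : Fin n, (Sum.inl j, Sum.inl i) ∈ M} ∧
    {i : Fin n | (Sum.inl i, Sum.inr i) ∈ M} =
      {i : Fin n | ¬ ∃ j : Fin n, (Sum.inl i, Sum.inl j) ∈ M} := by
  obtain ⟨⟨hadj, huL, huR⟩, hcovL, hcovR⟩ := hM
  have key1 : ∀ i : Fin n, (Sum.inr i, Sum.inl i) ∈ M ↔ (Sum.inl i, Sum.inr i) ∈ M := by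
    intro i
    constructor
    · intro h
      obtain ⟨⟨a, b⟩, hp, hp2⟩ := hcovR (Sum.inr i)
      have ha := hadj _ hp
      simp only at hp2
      subst hp2
      cases a with
      | inl j => simp only [HAdj] at ha; subst ha; exact hp
      | inr j =>
        simp only [HAdj] at ha; subst ha
        have := huL _ h _ hp rfl
        simp at this
    · intro h
      obtain ⟨⟨a, b⟩, hp, hp1⟩ := hcovL (Sum.inr i)
      have ha := hadj _ hp
      simp only at hp1
      subst hp1
      cases b with
      | inl j => simp only [HAdj] at ha; subst ha; exact hp
      | inr j =>
        simp only [HAdj] at ha; subst ha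
        have := huR _ h _ hp rfl
        simp at this
  have key2 : ∀ i : Fin n,
      (Sum.inr i, Sum.inl i) ∈ M ↔ ¬ ∃ j : Fin n, (Sum.inl j, Sum.inl i) ∈ M := by
    intro i
    constructor
    · rintro h ⟨j, hj⟩
      have := huR _ h _ hj rfl
      simp at this
    · intro h
      obtain ⟨⟨a, b⟩, hp, hp2⟩ := hcovR (Sum.inl i)
      have ha := hadj _ hp
      simp only at hp2
      subst hp2
      cases a with
      | inl j => exact absurd ⟨j, hp⟩ h
      | inr j => simp only [HAdj] at ha; subst ha; exact hp
  have key3 : ∀ i : Fin n,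
      (Sum.inl i, Sum.inr i) ∈ M ↔ ¬ ∃ j : Fin n, (Sum.inl i, Sum.inl j) ∈ M := by
    intro i
    constructor
    · rintro h ⟨j, hj⟩
      have := huL _ h _ hj rfl
      simp at this
    · intro h
      obtain ⟨⟨a, b⟩, hp, hp1⟩ := hcovL (Sum.inl i)
      have ha := hadj _ hp
      simp only at hp1
      subst hp1
      cases b with
      | inl j => exact absurd ⟨j, hp⟩ h
      | inr j => simp only [HAdj] at ha; subst ha; exact hp
  exact ⟨Set.ext key1, Set.ext key2, Set.ext key3⟩
end

section
/- Let E be a relation on Fin n, and assign weights to the edges of H(E): dynamics edges (inl i, inl j) have weight 3, edges (inl i, inr i) and (inr i, inl i) have weight 1, and edges (inr i, inr i) have weight 2. Then every perfect matching M of H(E) has total weight exactly 2n + 3k, where k is the number of dynamics edges contained in M. -/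
/-- Edge weights on `H(E)`: dynamics edges weight 3, state-output and input-state
edges weight 1, input-output edges weight 2. -/
def hWeight {n : ℕ} (p : (Fin n ⊕ Fin n) × (Fin n ⊕ Fin n)) : ℕ :=
  match p with
  | (Sum.inl _, Sum.inl _) => 3
  | (Sum.inl _, Sum.inr _) => 1
  | (Sum.inr _, Sum.inl _) => 1
  | (Sum.inr _, Sum.inr _) => 2

/-- `p` is a dynamics edge. -/
def isDyn {n : ℕ} (p : (Fin n ⊕ Fin n) × (Fin n ⊕ Fin n)) : Bool :=
  match p with
  | (Sum.inl _, Sum.inl _) => true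
  | _ => false

theorem stmt4 {n : ℕ} (E : Fin n → Fin n → Prop)
    (M : Finset ((Fin n ⊕ Fin n) × (Fin n ⊕ Fin n)))
    (hM : IsPerfectMatchingH E M) :
    ∑ p ∈ M, hWeight p = 2 * n + 3 * (M.filter (fun p => isDyn p = true)).card := by
  obtain ⟨⟨hadj, hl, hr⟩, hcov1, hcov2⟩ := hM
  have hsplit : ∀ p ∈ M, hWeight p =
      ((if Sum.isRight p.1 then 1 else 0) + (if Sum.isRight p.2 then 1 else 0))
      + (if isDyn p = true then 3 else 0) := by
    intro p _
    rcases p with ⟨a|a, b|b⟩ <;> simp [hWeight, isDyn]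
  rw [Finset.sum_congr rfl hsplit, Finset.sum_add_distrib, Finset.sum_add_distrib]
  have h1 : ∑ p ∈ M, (if Sum.isRight p.1 then 1 else 0) =
      ∑ v : Fin n ⊕ Fin n, (if Sum.isRight v then 1 else 0) := by
    apply Finset.sum_bij (fun p _ => p.1)
    · intros; exact Finset.mem_univ _
    · intro p hp q hq h; exact hl p hp q hq h
    · intro v _; obtain ⟨p, hp, hpv⟩ := hcov1 v; exact ⟨p, hp, hpv⟩
    · intros; rfl
  have h2 : ∑ p ∈ M, (if Sum.isRight p.2 then 1 else 0) =
      ∑ v : Fin n ⊕ Fin n, (if Sum.isRight v then 1 else 0) := by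
    apply Finset.sum_bij (fun p _ => p.2)
    · intros; exact Finset.mem_univ _
    · intro p hp q hq h; exact hr p hp q hq h
    · intro v _; obtain ⟨p, hp, hpv⟩ := hcov2 v; exact ⟨p, hp, hpv⟩
    · intros; rfl
  have huniv : ∑ v : Fin n ⊕ Fin n, (if Sum.isRight v then 1 else 0) = n := by
    rw [Fintype.sum_sum_type]; simp
  have h3 : ∑ p ∈ M, (if isDyn p = true then 3 else 0) =
      3 * (M.filter (fun p => isDyn p = true)).card := by
    rw [← Finset.sum_filter, Finset.sum_const, smul_eq_mul, mul_comm]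
  rw [h1, h2, huniv, h3]
  ring
end

section
/- Let E be a relation on Fin n. There is a bijection between perfect matchings of H(E) and matchings M_A of the bipartite graph B(E) satisfying the balance condition that the set of matched left indices of M_A equals the set of matched right indices of M_A: the bijection sends a perfect matching M of H(E) to its set of dynamics edges, and conversely a balanced matching M_A with matched index set T extends uniquely to the perfect matching M_A ∪ {(inl i, inr i) : i ∉ T} ∪ {(inr i, inl i) : i ∉ T} ∪ {(inr i, inr i) : i ∈ T}. -/
/-- The set of dynamics edges of a matching of `H(E)`, viewed as a set of edges of `B(E)`. -/
def dynPart {n : ℕ} (M : Finset ((Fin n ⊕ Fin n) × (Fin n ⊕ Fin n))) :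
    Finset (Fin n × Fin n) :=
  (Finset.univ : Finset (Fin n × Fin n)).filter
    (fun p => ((Sum.inl p.1 : Fin n ⊕ Fin n), (Sum.inl p.2 : Fin n ⊕ Fin n)) ∈ M)

/-- The unique extension of a balanced matching `A` of `B(E)` (with matched index set
`T = A.image Prod.fst`) to a perfect matching of `H(E)`:
`A ∪ {(inl i, inr i) : i ∉ T} ∪ {(inr i, inl i) : i ∉ T} ∪ {(inr i, inr i) : i ∈ T}`. -/
def extendMatching {n : ℕ} (A : Finset (Fin n × Fin n)) :
    Finset ((Fin n ⊕ Fin n) × (Fin n ⊕ Fin n)) :=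
  A.image (fun p => ((Sum.inl p.1 : Fin n ⊕ Fin n), (Sum.inl p.2 : Fin n ⊕ Fin n))) ∪
  ((Finset.univ \ A.image Prod.fst).image
    (fun i => ((Sum.inl i : Fin n ⊕ Fin n), (Sum.inr i : Fin n ⊕ Fin n)))) ∪
  ((Finset.univ \ A.image Prod.fst).image
    (fun i => ((Sum.inr i : Fin n ⊕ Fin n), (Sum.inl i : Fin n ⊕ Fin n)))) ∪
  ((A.image Prod.fst).image
    (fun i => ((Sum.inr i : Fin n ⊕ Fin n), (Sum.inr i : Fin n ⊕ Fin n))))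



lemma mem_dynPart {n : ℕ} (M : Finset ((Fin n ⊕ Fin n) × (Fin n ⊕ Fin n))) (i j : Fin n) :
    (i, j) ∈ dynPart M ↔ ((Sum.inl i, Sum.inl j) : (Fin n ⊕ Fin n) × (Fin n ⊕ Fin n)) ∈ M := by
  simp [dynPart]

lemma mem_extend {n : ℕ} (A : Finset (Fin n × Fin n)) (p : (Fin n ⊕ Fin n) × (Fin n ⊕ Fin n)) :
    p ∈ extendMatching A ↔
      ((∃ q ∈ A, p = (Sum.inl q.1, Sum.inl q.2)) ∨
       (∃ i, i ∉ A.image Prod.fst ∧ p = (Sum.inl i, Sum.inr i)) ∨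
       (∃ i, i ∉ A.image Prod.fst ∧ p = (Sum.inr i, Sum.inl i)) ∨
       (∃ i, i ∈ A.image Prod.fst ∧ p = (Sum.inr i, Sum.inr i))) := by
  simp only [extendMatching, Finset.mem_union, Finset.mem_image, Finset.mem_sdiff,
    Finset.mem_univ, true_and, or_assoc, eq_comm]


section
variable {n : ℕ} {E : Fin n → Fin n → Prop}
variable {M : Finset ((Fin n ⊕ Fin n) × (Fin n ⊕ Fin n))}

lemma key (hM : IsPerfectMatchingH E M) (i : Fin n) :
    ((∃ j, ((Sum.inl i, Sum.inl j) : (Fin n ⊕ Fin n) × _) ∈ M) ↔ (Sum.inr i, Sum.inr i) ∈ M) ∧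
    ((∃ j, ((Sum.inl j, Sum.inl i) : (Fin n ⊕ Fin n) × _) ∈ M) ↔ (Sum.inr i, Sum.inr i) ∈ M) := by
  obtain ⟨⟨hadj, hL, hR⟩, hcovL, hcovR⟩ := hM
  constructor
  · constructor
    · rintro ⟨j, hj⟩
      -- inr i right-covered by (a, inr i), a = inl i or inr i by adjacency
      obtain ⟨p, hp, hp2⟩ := hcovR (Sum.inr i)
      have := hadj p hp
      obtain ⟨a, b⟩ := p
      simp only at hp2; subst hp2
      cases a with
      | inl a =>
        simp only [HAdj] at this; subst this
        exact absurd (hL _ hp _ hj rfl) (by simp)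
      | inr a =>
        simp only [HAdj] at this; subst this; exact hp
    · intro h
      -- inl i left-covered by (inl i, b)
      obtain ⟨p, hp, hp1⟩ := hcovL (Sum.inl i)
      have := hadj p hp
      obtain ⟨a, b⟩ := p
      simp only at hp1; subst hp1
      cases b with
      | inl b => exact ⟨b, hp⟩
      | inr b =>
        simp only [HAdj] at this; subst this
        exact absurd (hR _ hp _ h rfl) (by simp)
  · constructor
    · rintro ⟨j, hj⟩
      obtain ⟨p, hp, hp1⟩ := hcovL (Sum.inr i)
      have := hadj p hp
      obtain ⟨a, b⟩ := p
      simp only at hp1; subst hp1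
      cases b with
      | inl b =>
        simp only [HAdj] at this; subst this
        exact absurd (hR _ hp _ hj rfl) (by simp)
      | inr b =>
        simp only [HAdj] at this; subst this; exact hp
    · intro h
      obtain ⟨p, hp, hp2⟩ := hcovR (Sum.inl i)
      have := hadj p hp
      obtain ⟨a, b⟩ := p
      simp only at hp2; subst hp2
      cases a with
      | inl a => exact ⟨a, hp⟩
      | inr a =>
        simp only [HAdj] at this; subst this
        exact absurd (hL _ hp _ h rfl) (by simp)

end

section
variable {n : ℕ} {E : Fin n → Fin n → Prop}

lemma dir2 (A : Finset (Fin n × Fin n)) (hA : IsBMatching E A)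
    (hbal : A.image Prod.fst = A.image Prod.snd) :
    IsPerfectMatchingH E (extendMatching A) ∧ dynPart (extendMatching A) = A := by
  obtain ⟨hadj, hL, hR⟩ := hA
  constructor
  · refine ⟨⟨?_, ?_, ?_⟩, ?_, ?_⟩
    · intro p hp
      rw [mem_extend] at hp
      rcases hp with ⟨a,ha,rfl⟩|⟨i,hi,rfl⟩|⟨i,hi,rfl⟩|⟨i,hi,rfl⟩
      · exact hadj a ha
      · rfl
      · rfl
      · rfl
    · intro p hp q hq h
      rw [mem_extend] at hp hq
      rcases hp with ⟨a,ha,rfl⟩|⟨i,hi,rfl⟩|⟨i,hi,rfl⟩|⟨i,hi,rfl⟩ <;>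
        rcases hq with ⟨b,hb,rfl⟩|⟨j,hj,rfl⟩|⟨j,hj,rfl⟩|⟨j,hj,rfl⟩ <;>
        simp only [Sum.inl.injEq, Sum.inr.injEq, reduceCtorEq] at h
      · rw [hL a ha b hb h]
      · subst h; exact absurd (Finset.mem_image_of_mem Prod.fst ha) hj
      · subst h; exact absurd (Finset.mem_image_of_mem Prod.fst hb) hi
      · subst h; rfl
      · subst h; rfl
      · subst h; exact absurd hj hi
      · subst h; exact absurd hi hj
      · subst h; rfl
    · intro p hp q hq h
      rw [mem_extend] at hp hq
      rcases hp with ⟨a,ha,rfl⟩|⟨i,hi,rfl⟩|⟨i,hi,rfl⟩|⟨i,hi,rfl⟩ <;>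
        rcases hq with ⟨b,hb,rfl⟩|⟨j,hj,rfl⟩|⟨j,hj,rfl⟩|⟨j,hj,rfl⟩ <;>
        simp only [Sum.inl.injEq, Sum.inr.injEq, reduceCtorEq] at h
      · rw [hR a ha b hb h]
      · subst h; rw [hbal] at hj
        exact absurd (Finset.mem_image_of_mem Prod.snd ha) hj
      · subst h; rfl
      · subst h; exact absurd hj hi
      · subst h; rw [hbal] at hi
        exact absurd (Finset.mem_image_of_mem Prod.snd hb) hi
      · subst h; rfl
      · subst h; exact absurd hi hj
      · subst h; rfl
    · intro v
      cases v with
      | inl i =>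
        by_cases hi : i ∈ A.image Prod.fst
        · obtain ⟨a, ha, rfl⟩ := Finset.mem_image.mp hi
          exact ⟨(Sum.inl a.1, Sum.inl a.2), (mem_extend A _).mpr (.inl ⟨a, ha, rfl⟩), rfl⟩
        · exact ⟨(Sum.inl i, Sum.inr i), (mem_extend A _).mpr (.inr (.inl ⟨i, hi, rfl⟩)), rfl⟩
      | inr i =>
        by_cases hi : i ∈ A.image Prod.fst
        · exact ⟨(Sum.inr i, Sum.inr i), (mem_extend A _).mpr (.inr (.inr (.inr ⟨i, hi, rfl⟩))), rfl⟩
        · exact ⟨(Sum.inr i, Sum.inl i), (mem_extend A _).mpr (.inr (.inr (.inl ⟨i, hi, rfl⟩))), rfl⟩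
    · intro v
      cases v with
      | inl i =>
        by_cases hi : i ∈ A.image Prod.fst
        · rw [hbal] at hi
          obtain ⟨a, ha, rfl⟩ := Finset.mem_image.mp hi
          exact ⟨(Sum.inl a.1, Sum.inl a.2), (mem_extend A _).mpr (.inl ⟨a, ha, rfl⟩), rfl⟩
        · exact ⟨(Sum.inr i, Sum.inl i), (mem_extend A _).mpr (.inr (.inr (.inl ⟨i, hi, rfl⟩))), rfl⟩
      | inr i =>
        by_cases hi : i ∈ A.image Prod.fst
        · exact ⟨(Sum.inr i, Sum.inr i), (mem_extend A _).mpr (.inr (.inr (.inr ⟨i, hi, rfl⟩))), rfl⟩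
        · exact ⟨(Sum.inl i, Sum.inr i), (mem_extend A _).mpr (.inr (.inl ⟨i, hi, rfl⟩)), rfl⟩
  · ext ⟨i, j⟩
    rw [mem_dynPart, mem_extend]
    constructor
    · rintro (⟨a,ha,h⟩|⟨k,hk,h⟩|⟨k,hk,h⟩|⟨k,hk,h⟩) <;> simp_all
    · intro h
      exact .inl ⟨(i,j), h, rfl⟩

lemma dir1 {M : Finset ((Fin n ⊕ Fin n) × (Fin n ⊕ Fin n))} (hM : IsPerfectMatchingH E M) :
    IsBMatching E (dynPart M) ∧
    (dynPart M).image Prod.fst = (dynPart M).image Prod.snd ∧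
    extendMatching (dynPart M) = M := by
  have hTd : ∀ i : Fin n, i ∈ (dynPart M).image Prod.fst ↔
      ∃ j, ((Sum.inl i, Sum.inl j) : (Fin n ⊕ Fin n) × _) ∈ M := by
    intro i
    simp only [Finset.mem_image, dynPart, Finset.mem_filter, Finset.mem_univ, true_and]
    constructor
    · rintro ⟨⟨x, y⟩, h, rfl⟩; exact ⟨y, h⟩
    · rintro ⟨j, hj⟩; exact ⟨(i, j), hj, rfl⟩
  have hTs : ∀ i : Fin n, i ∈ (dynPart M).image Prod.snd ↔
      ∃ j, ((Sum.inl j, Sum.inl i) : (Fin n ⊕ Fin n) × _) ∈ M := by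
    intro i
    simp only [Finset.mem_image, dynPart, Finset.mem_filter, Finset.mem_univ, true_and]
    constructor
    · rintro ⟨⟨x, y⟩, h, rfl⟩; exact ⟨x, h⟩
    · rintro ⟨j, hj⟩; exact ⟨(j, i), hj, rfl⟩
  have hT1 : ∀ i : Fin n, i ∈ (dynPart M).image Prod.fst ↔
      ((Sum.inr i, Sum.inr i) : (Fin n ⊕ Fin n) × _) ∈ M := by
    intro i; rw [hTd]; exact (key hM i).1
  obtain ⟨⟨hadj, hL, hR⟩, hcovL, hcovR⟩ := hM
  refine ⟨⟨?_, ?_, ?_⟩, ?_, ?_⟩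
  · rintro ⟨i, j⟩ hp
    exact hadj _ ((mem_dynPart M i j).mp hp)
  · rintro ⟨i, j⟩ hp ⟨i', j'⟩ hq h
    simp only at h; subst h
    rw [mem_dynPart] at hp hq
    have := hL _ hp _ hq rfl
    simp only [Prod.mk.injEq, Sum.inl.injEq] at this
    rw [this.2]
  · rintro ⟨i, j⟩ hp ⟨i', j'⟩ hq h
    simp only at h; subst h
    rw [mem_dynPart] at hp hq
    have := hR _ hp _ hq rfl
    simp only [Prod.mk.injEq, Sum.inl.injEq] at this
    rw [this.1]
  · ext i
    rw [hT1, hTs, (key ⟨⟨hadj, hL, hR⟩, hcovL, hcovR⟩ i).2]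
  · ext p
    rw [mem_extend]
    constructor
    · rintro (⟨⟨i,j⟩, ha, rfl⟩ | ⟨i, hi, rfl⟩ | ⟨i, hi, rfl⟩ | ⟨i, hi, rfl⟩)
      · exact (mem_dynPart M i j).mp ha
      · obtain ⟨⟨a, b⟩, hp, hp1⟩ := hcovL (Sum.inl i)
        simp only at hp1; subst hp1
        have := hadj _ hp
        cases b with
        | inl b => exact absurd ((hTd i).mpr ⟨b, hp⟩) hi
        | inr b =>
          simp only [HAdj] at this; subst this; exact hp
      · obtain ⟨⟨a, b⟩, hp, hp2⟩ := hcovR (Sum.inl i)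
        simp only at hp2; subst hp2
        have := hadj _ hp
        cases a with
        | inl a =>
          rw [hT1, ← (key ⟨⟨hadj, hL, hR⟩, hcovL, hcovR⟩ i).2] at hi
          exact absurd ⟨a, hp⟩ hi
        | inr a =>
          simp only [HAdj] at this; subst this; exact hp
      · exact (hT1 i).mp hi
    · intro hp
      obtain ⟨a, b⟩ := p
      have hab := hadj _ hp
      cases a with
      | inl i =>
        cases b with
        | inl j => exact .inl ⟨(i, j), (mem_dynPart M i j).mpr hp, rfl⟩
        | inr j =>
          simp only [HAdj] at hab; subst hab
          refine .inr (.inl ⟨i, fun hi => ?_, rfl⟩)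
          obtain ⟨j', hj'⟩ := (hTd i).mp hi
          have := hL _ hp _ hj' rfl
          simp at this
      | inr i =>
        cases b with
        | inl j =>
          simp only [HAdj] at hab; subst hab
          refine .inr (.inr (.inl ⟨i, fun hi => ?_, rfl⟩))
          have := hL _ hp _ ((hT1 i).mp hi) rfl
          simp at this
        | inr j =>
          simp only [HAdj] at hab; subst hab
          exact .inr (.inr (.inr ⟨i, (hT1 i).mpr hp, rfl⟩))


end


theorem stmt5 {n : ℕ} (E : Fin n → Fin n → Prop) :
    (∀ M : Finset ((Fin n ⊕ Fin n) × (Fin n ⊕ Fin n)),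
      IsPerfectMatchingH E M →
        IsBMatching E (dynPart M) ∧
        (dynPart M).image Prod.fst = (dynPart M).image Prod.snd ∧
        extendMatching (dynPart M) = M) ∧
    (∀ A : Finset (Fin n × Fin n),
      IsBMatching E A →
      A.image Prod.fst = A.image Prod.snd →
        IsPerfectMatchingH E (extendMatching A) ∧
        dynPart (extendMatching A) = A) :=
  ⟨fun _ hM => dir1 hM, fun A hA hbal => dir2 A hA hbal⟩
end

section
/- Let E be a relation on Fin n and define k* as the maximum, over families of vertex-disjoint directed cycles of the digraph E, of the total number of vertices covered (equivalently, the maximum size of a subset T ⊆ Fin n admitting a permutation σ of T with E i (σ i) for all i ∈ T). With edge weights 3 on dynamics edges, 1 on (inl i, inr i) and (inr i, inl i), and 2 on (inr i, inr i), the maximum total weight of a perfect matching of H(E) equals 2n + 3k*. -/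
/-- `T` is covered by a family of vertex-disjoint directed cycles of `E`, encoded as a
permutation `σ` mapping `T` into itself with `E i (σ i)` for all `i ∈ T`. -/
def IsCycleFamilyOn {n : ℕ} (E : Fin n → Fin n → Prop)
    (T : Finset (Fin n)) (σ : Equiv.Perm (Fin n)) : Prop :=
  (∀ i ∈ T, σ i ∈ T) ∧ (∀ i ∈ T, E i (σ i))

/-!
A perfect matching of `H(E)` is the graph of a permutation `m` of `Fin n ⊕ Fin n` moving every
vertex along an edge. Since `hWeight (a, b) = [a = inr _] + [b = inr _] + 3 [a, b both inl]` and
`m` is a bijection, the weight of the matching is `2n + 3k`, where `k` counts the `i` with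
`m (inl i)` on the left. On these `i`, `m (inl i) = inl (σ i)` defines a cycle family `σ` of
`E`: it maps them to themselves, since for `j` outside, `m (inl j) = inr j` and hence
`m (inr j) = inl j`.
Conversely a cycle family `(T, σ)` gives the matching that follows `σ` on `T` and the
2-cycles `inl i ↔ inr i` off `T`, of weight `2n + 3 #T`.
-/

open Finset Function Equiv Sum

section Graph

variable {α β : Type*} [Fintype α]

def graphFinset (m : α → β) : Finset (α × β) :=
  univ.map ⟨fun a => (a, m a), fun _ _ h => congrArg Prod.fst h⟩

lemma mem_graphFinset {m : α → β} {p : α × β} : p ∈ graphFinset m ↔ m p.1 = p.2 := by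
  simp only [graphFinset, mem_map, mem_univ, true_and]
  exact ⟨fun ⟨a, ha⟩ => ha ▸ rfl, fun h => ⟨p.1, Prod.ext rfl h⟩⟩

lemma sum_graphFinset {M : Type*} [AddCommMonoid M] (m : α → β) (f : α × β → M) :
    ∑ p ∈ graphFinset m, f p = ∑ a, f (a, m a) :=
  sum_map _ _ _

lemma isBMatching_graphFinset {Adj : α → β → Prop} {m : α → β} (hm : Injective m)
    (hadj : ∀ a, Adj a (m a)) : IsBMatching Adj (graphFinset m) := by
  refine ⟨fun p hp => ?_, fun p hp q hq h => ?_, fun p hp q hq h => ?_⟩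
  · rw [mem_graphFinset] at hp; exact hp ▸ hadj p.1
  · rw [mem_graphFinset] at hp hq; exact Prod.ext h (by rw [← hp, ← hq, h])
  · rw [mem_graphFinset] at hp hq; exact Prod.ext (hm (by rw [hp, hq, h])) h

lemma IsBMatching.exists_eq_graphFinset {Adj : α → β → Prop} {M : Finset (α × β)}
    (hM : IsBMatching Adj M) (hcov : ∀ a, ∃ p ∈ M, p.1 = a) :
    ∃ m : α → β, Injective m ∧ (∀ a, Adj a (m a)) ∧ M = graphFinset m := by
  obtain ⟨hadj, hfst, hsnd⟩ := hM
  choose p hpM hp using hcov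
  refine ⟨fun a => (p a).2, fun a b h => ?_, fun a => by simpa [hp a] using hadj _ (hpM a), ?_⟩
  · rw [← hp a, ← hp b, hsnd _ (hpM a) _ (hpM b) h]
  · ext q
    refine ⟨fun hq => ?_, fun hq => ?_⟩
    · rw [mem_graphFinset, hfst _ (hpM q.1) _ hq (hp q.1)]
    · rw [mem_graphFinset] at hq
      have : p q.1 = q := Prod.ext (hp q.1) hq
      exact this ▸ hpM q.1

end Graph

section Weight

variable {n : ℕ}

lemma hWeight_eq (a b : Fin n ⊕ Fin n) :
    hWeight (a, b) = (if a.isRight then 1 else 0) + (if b.isRight then 1 else 0) +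
      if a.isLeft ∧ b.isLeft then 3 else 0 := by
  rcases a with a | a <;> rcases b with b | b <;> rfl

def leftToLeft (m : Perm (Fin n ⊕ Fin n)) : Finset (Fin n) := {i | (m (inl i)).isLeft}

lemma mem_leftToLeft {m : Perm (Fin n ⊕ Fin n)} {i : Fin n} :
    i ∈ leftToLeft m ↔ (m (inl i)).isLeft := by
  simp [leftToLeft]

lemma sum_hWeight_graphFinset (m : Perm (Fin n ⊕ Fin n)) :
    ∑ p ∈ graphFinset m, hWeight p = 2 * n + 3 * #(leftToLeft m) := by
  have hright : ∑ v : Fin n ⊕ Fin n, (if v.isRight then 1 else 0) = n := by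
    rw [Fintype.sum_sum_type]; simp
  have hright_comp : ∑ v, (if (m v).isRight then 1 else 0) = n :=
    (Equiv.sum_comp m (fun v => if v.isRight then 1 else 0)).trans hright
  have hleft : ∑ v, (if v.isLeft ∧ (m v).isLeft then 3 else 0) = 3 * #(leftToLeft m) := by
    rw [Fintype.sum_sum_type]
    simp [leftToLeft, ← sum_filter, mul_comm]
  rw [sum_graphFinset]
  simp only [hWeight_eq, sum_add_distrib, hright, hright_comp, hleft]
  ring

end Weight

section PerfectMatching

variable {n : ℕ} {E : Fin n → Fin n → Prop}

lemma isPerfectMatchingH_graphFinset {m : Perm (Fin n ⊕ Fin n)} (hadj : ∀ v, HAdj E v (m v)) :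
    IsPerfectMatchingH E (graphFinset m) :=
  ⟨isBMatching_graphFinset m.injective hadj, fun v => ⟨(v, m v), mem_graphFinset.2 rfl, rfl⟩,
    fun v => ⟨(m.symm v, v), mem_graphFinset.2 (m.apply_symm_apply v), rfl⟩⟩

lemma IsPerfectMatchingH.exists_eq_graphFinset {M : Finset ((Fin n ⊕ Fin n) × (Fin n ⊕ Fin n))}
    (hM : IsPerfectMatchingH E M) :
    ∃ m : Perm (Fin n ⊕ Fin n), (∀ v, HAdj E v (m v)) ∧ M = graphFinset m := by
  obtain ⟨m, hinj, hadj, rfl⟩ := hM.1.exists_eq_graphFinset hM.2.1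
  exact ⟨Equiv.ofBijective m (Finite.injective_iff_bijective.mp hinj), hadj, rfl⟩

end PerfectMatching

section CycleFamily

variable {n : ℕ} {E : Fin n → Fin n → Prop}

lemma IsCycleFamilyOn.exists_perm {T : Finset (Fin n)} {σ : Perm (Fin n)}
    (h : IsCycleFamilyOn E T σ) :
    ∃ m : Perm (Fin n ⊕ Fin n), (∀ v, HAdj E v (m v)) ∧ leftToLeft m = T := by
  obtain ⟨hmaps, hedge⟩ := h
  let m : Fin n ⊕ Fin n → Fin n ⊕ Fin n :=
    Sum.elim (fun i => if i ∈ T then inl (σ i) else inr i)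
      (fun i => if i ∈ T then inr i else inl i)
  have hinj : Injective m := by
    rintro (i | i) (j | j) h <;> by_cases hi : i ∈ T <;> by_cases hj : j ∈ T <;>
      simp_all [m, σ.injective.eq_iff]
    exact hj (h ▸ hmaps i hi)
  refine ⟨Equiv.ofBijective m (Finite.injective_iff_bijective.mp hinj), ?_, ?_⟩
  · rintro (i | i) <;> by_cases hi : i ∈ T <;> simp [m, HAdj, hi, hedge]
  · ext i
    by_cases hi : i ∈ T <;> simp [leftToLeft, m, hi]

end CycleFamily

section LeftSucc

variable {n : ℕ} {E : Fin n → Fin n → Prop} {m : Perm (Fin n ⊕ Fin n)}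

def leftSucc (m : Perm (Fin n ⊕ Fin n)) (i : Fin n) : Fin n :=
  (m (inl i)).elim id fun _ => i

lemma apply_inl_of_mem_leftToLeft {i : Fin n} (hi : i ∈ leftToLeft m) :
    m (inl i) = inl (leftSucc m i) := by
  rw [mem_leftToLeft] at hi
  rcases h : m (inl i) with j | j
  · simp [leftSucc, h]
  · simp [h] at hi

lemma leftSucc_of_not_mem_leftToLeft {i : Fin n} (hi : i ∉ leftToLeft m) :
    leftSucc m i = i := by
  rw [mem_leftToLeft] at hi
  rcases h : m (inl i) with j | j
  · simp [h] at hi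
  · simp [leftSucc, h]

lemma apply_inl_of_not_mem_leftToLeft (hadj : ∀ v, HAdj E v (m v)) {i : Fin n}
    (hi : i ∉ leftToLeft m) :
    m (inl i) = inr i := by
  rw [mem_leftToLeft] at hi
  have := hadj (inl i)
  rcases h : m (inl i) with j | j
  · simp [h] at hi
  · rw [h] at this; exact congrArg inr this.symm

lemma apply_inr_of_not_mem_leftToLeft (hadj : ∀ v, HAdj E v (m v)) {i : Fin n}
    (hi : i ∉ leftToLeft m) :
    m (inr i) = inl i := by
  have := hadj (inr i)
  rcases h : m (inr i) with j | j
  · rw [h] at this; exact congrArg inl this.symm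
  · rw [h] at this
    have : m (inr i) = m (inl i) := by rw [h, apply_inl_of_not_mem_leftToLeft hadj hi, this]
    simp at this

lemma leftSucc_mem_leftToLeft (hadj : ∀ v, HAdj E v (m v)) {i : Fin n}
    (hi : i ∈ leftToLeft m) :
    leftSucc m i ∈ leftToLeft m := by
  by_contra hj
  have : m (inl i) = m (inr (leftSucc m i)) := by
    rw [apply_inl_of_mem_leftToLeft hi, apply_inr_of_not_mem_leftToLeft hadj hj]
  simp at this

lemma leftSucc_injective (hadj : ∀ v, HAdj E v (m v)) : Injective (leftSucc m) := by
  intro i j h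
  by_cases hi : i ∈ leftToLeft m <;> by_cases hj : j ∈ leftToLeft m
  · have : m (inl i) = m (inl j) := by
      rw [apply_inl_of_mem_leftToLeft hi, apply_inl_of_mem_leftToLeft hj, h]
    simpa using this
  · rw [leftSucc_of_not_mem_leftToLeft hj] at h
    exact absurd (h ▸ leftSucc_mem_leftToLeft hadj hi) hj
  · rw [leftSucc_of_not_mem_leftToLeft hi] at h
    exact absurd (h ▸ leftSucc_mem_leftToLeft hadj hj) hi
  · rwa [leftSucc_of_not_mem_leftToLeft hi, leftSucc_of_not_mem_leftToLeft hj] at h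

lemma exists_isCycleFamilyOn_leftToLeft (hadj : ∀ v, HAdj E v (m v)) :
    ∃ σ, IsCycleFamilyOn E (leftToLeft m) σ := by
  refine ⟨Equiv.ofBijective _ (Finite.injective_iff_bijective.mp (leftSucc_injective hadj)),
    fun i hi => leftSucc_mem_leftToLeft hadj hi, fun i hi => ?_⟩
  have := hadj (inl i)
  rwa [apply_inl_of_mem_leftToLeft hi] at this

end LeftSucc

theorem stmt6 {n : ℕ} (E : Fin n → Fin n → Prop) (kstar : ℕ)
    (hmax : (∃ T : Finset (Fin n), ∃ σ : Equiv.Perm (Fin n),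
        IsCycleFamilyOn E T σ ∧ T.card = kstar) ∧
      (∀ T : Finset (Fin n), ∀ σ : Equiv.Perm (Fin n),
        IsCycleFamilyOn E T σ → T.card ≤ kstar)) :
    (∃ M : Finset ((Fin n ⊕ Fin n) × (Fin n ⊕ Fin n)),
      IsPerfectMatchingH E M ∧ ∑ p ∈ M, hWeight p = 2 * n + 3 * kstar) ∧
    (∀ M : Finset ((Fin n ⊕ Fin n) × (Fin n ⊕ Fin n)),
      IsPerfectMatchingH E M → ∑ p ∈ M, hWeight p ≤ 2 * n + 3 * kstar) := by
  obtain ⟨⟨T, σ, hσ, rfl⟩, hle⟩ := hmax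
  refine ⟨?_, fun M hM => ?_⟩
  · obtain ⟨m, hadj, hT⟩ := hσ.exists_perm
    exact ⟨graphFinset m, isPerfectMatchingH_graphFinset hadj,
      by rw [sum_hWeight_graphFinset, hT]⟩
  · obtain ⟨m, hadj, rfl⟩ := hM.exists_eq_graphFinset
    obtain ⟨τ, hτ⟩ := exists_isCycleFamilyOn_leftToLeft hadj
    rw [sum_hWeight_graphFinset]
    linarith [hle _ τ hτ]
end

section
/- Let f be a partial injective function on Fin n with domain D and range R (equivalently, a matching of a bipartite graph on Fin n ⊔ Fin n). Then Fin n decomposes into: (i) the set C of elements lying on f-cycles (elements i such that iterating f starting at i returns to i), on which f restricts to a permutation; (ii) p maximal f-chains, each a sequence a = v_0, f(v_0)=v_1, ..., v_ℓ = b with ℓ ≥ 1, a ∉ R, and b ∉ D; and (iii) a set of u isolated elements belonging to neither D nor R. Moreover |(Fin n \ D) ∪ (Fin n \ R)| = 2p + u. -/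
/-!
Extend `f` to a permutation `σ` agreeing with `f` on `D`; this is possible because `f` is
injective on the finite set `D`. Inside `D` the iterates of `f` are those of `σ`, and every
`σ`-orbit is finite. The points whose whole forward `σ`-orbit stays in `D` form the `f`-cycles.
On every other orbit, each point `a ∈ D \ R` (equivalently `a ∈ D`, `σ⁻¹ a ∉ D`) starts an
`f`-chain `a, σ a, …` that runs until the orbit first leaves `D`, and the remaining points of
the orbit lie neither in `D` nor in `R`. Two such segments that meet have the same start,
because their starts are not in `σ '' D`. Hence the chains are counted by `D \ R`, and since
`|R| = |D|`, the complement of `D ∩ R` has `2 |D \ R| + |(D ∪ R)ᶜ|` elements.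
-/

open Function Equiv Finset

theorem Set.InjOn.exists_perm_eqOn {α : Type*} [Finite α] {f : α → α} {s : Set α}
    (hf : s.InjOn f) : ∃ σ : Perm α, s.EqOn σ f := by
  classical
  exact ⟨(Equiv.Set.imageOfInjOn f s hf).extendSubtype, fun x hx =>
    Equiv.extendSubtype_apply_of_mem _ x hx⟩

theorem Finset.card_compl_union_compl_of_card_eq {α : Type*} [Fintype α] [DecidableEq α]
    {s t : Finset α} (h : #t = #s) : #(sᶜ ∪ tᶜ) = 2 * #(s \ t) + #(s ∪ t)ᶜ := by
  have hinter := card_sdiff_add_card_inter s t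
  have hunion := card_union_add_card_inter s t
  have huniv := card_le_univ (s ∪ t)
  rw [← compl_inter, card_compl, card_compl]
  omega

theorem Finset.mem_image_iff_inv_apply_mem {α : Type*} [DecidableEq α] {σ : Perm α}
    {f : α → α} {s : Finset α} (hσ : Set.EqOn σ f s) {v : α} :
    v ∈ s.image f ↔ σ⁻¹ v ∈ s := by
  rw [mem_image]
  constructor
  · rintro ⟨x, hx, rfl⟩
    simpa [← hσ hx] using hx
  · exact fun hv => ⟨σ⁻¹ v, hv, (hσ hv).symm.trans (σ.apply_symm_apply v)⟩

namespace Equiv.Perm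

variable {α : Type*} (σ : Perm α) (D : Set α)

def cyclePoints : Set α := {x | ∀ k : ℕ, (σ ^ k) x ∈ D}

-- `sInf ∅ = 0`: on `cyclePoints` the exit time is junk.
noncomputable def exitTime (a : α) : ℕ := sInf {k | (σ ^ k) a ∉ D}

noncomputable def chainFrom (a : α) : List α :=
  (List.range (σ.exitTime D a + 1)).map fun k => (σ ^ k) a

variable {σ D} {a b v x : α}

theorem mem_of_mem_cyclePoints (hx : x ∈ σ.cyclePoints D) : x ∈ D := by
  simpa using hx 0

theorem apply_mem_cyclePoints {f : α → α} (hσ : D.EqOn σ f) (hx : x ∈ σ.cyclePoints D) :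
    f x ∈ σ.cyclePoints D := fun k => by
  simpa [pow_succ, hσ (mem_of_mem_cyclePoints hx)] using hx (k + 1)

theorem iterate_eq_pow_apply {f : α → α} (hσ : D.EqOn σ f) {m : ℕ}
    (hm : ∀ i < m, (σ ^ i) x ∈ D) : f^[m] x = (σ ^ m) x := by
  induction m with
  | zero => rfl
  | succ m ih =>
    rw [iterate_succ_apply', ih fun i hi => hm i (by omega), pow_succ', mul_apply,
      hσ (hm m (by omega))]

theorem pow_apply_mem_of_lt_exitTime {k : ℕ} (hk : k < σ.exitTime D a) : (σ ^ k) a ∈ D := by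
  simpa using Nat.notMem_of_lt_sInf hk

theorem pow_exitTime_apply_notMem (ha : a ∉ σ.cyclePoints D) :
    (σ ^ σ.exitTime D a) a ∉ D := by
  obtain ⟨k, hk⟩ : ∃ k, (σ ^ k) a ∉ D := by simpa [cyclePoints] using ha
  exact Nat.sInf_mem (s := {k | (σ ^ k) a ∉ D}) ⟨k, hk⟩

theorem le_exitTime (ha : a ∉ σ.cyclePoints D) {k : ℕ} (hk : ∀ i < k, (σ ^ i) a ∈ D) :
    k ≤ σ.exitTime D a :=
  not_lt.1 fun hlt => pow_exitTime_apply_notMem ha (hk _ hlt)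

theorem mem_chainFrom : v ∈ σ.chainFrom D a ↔ ∃ k ≤ σ.exitTime D a, (σ ^ k) a = v := by
  simp [chainFrom]

theorem length_chainFrom : (σ.chainFrom D a).length = σ.exitTime D a + 1 := by
  simp [chainFrom]

theorem head?_chainFrom : (σ.chainFrom D a).head? = some a := by
  simp [chainFrom, List.range_succ_eq_map]

theorem getLast?_chainFrom :
    (σ.chainFrom D a).getLast? = some ((σ ^ σ.exitTime D a) a) := by
  simp [chainFrom, List.range_succ]

theorem isChain_chainFrom {f : α → α} (hσ : D.EqOn σ f) :
    (σ.chainFrom D a).IsChain fun x y => x ∈ D ∧ f x = y := by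
  rw [chainFrom, List.isChain_map, List.isChain_range_succ]
  refine fun k hk => ⟨pow_apply_mem_of_lt_exitTime hk, ?_⟩
  rw [← hσ (pow_apply_mem_of_lt_exitTime hk), pow_succ', mul_apply]

theorem eq_and_eq_of_pow_apply_eq_pow_apply {j k : ℕ} (ha : σ⁻¹ a ∉ D) (hb : σ⁻¹ b ∉ D)
    (hj : ∀ i < j, (σ ^ i) a ∈ D) (hk : ∀ i < k, (σ ^ i) b ∈ D)
    (h : (σ ^ j) a = (σ ^ k) b) : j = k ∧ a = b := by
  wlog hjk : j ≤ k generalizing a b j k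
  · obtain ⟨hkj, hba⟩ := this hb ha hk hj h.symm (by omega)
    exact ⟨hkj.symm, hba.symm⟩
  obtain ⟨d, rfl⟩ := Nat.exists_eq_add_of_le hjk
  have had : a = (σ ^ d) b := by
    rwa [pow_add, mul_apply, (σ ^ j).injective.eq_iff] at h
  rcases d with _ | d
  · simpa using had
  · refine absurd ?_ ha
    rw [had, ← mul_apply, pow_succ', inv_mul_cancel_left]
    exact hk d (by omega)

theorem nodup_chainFrom (ha : σ⁻¹ a ∉ D) : (σ.chainFrom D a).Nodup := by
  refine List.Nodup.map_on (fun i hi j hj hij => ?_) List.nodup_range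
  simp only [List.mem_range] at hi hj
  exact (eq_and_eq_of_pow_apply_eq_pow_apply ha ha
    (fun l hl => pow_apply_mem_of_lt_exitTime (by omega))
    (fun l hl => pow_apply_mem_of_lt_exitTime (by omega)) hij).1

theorem eq_of_mem_chainFrom_of_mem_chainFrom (ha : σ⁻¹ a ∉ D) (hb : σ⁻¹ b ∉ D)
    (hva : v ∈ σ.chainFrom D a) (hvb : v ∈ σ.chainFrom D b) : a = b := by
  obtain ⟨j, hj, rfl⟩ := mem_chainFrom.1 hva
  obtain ⟨k, hk, hjk⟩ := mem_chainFrom.1 hvb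
  exact (eq_and_eq_of_pow_apply_eq_pow_apply ha hb
    (fun l hl => pow_apply_mem_of_lt_exitTime (by omega))
    (fun l hl => pow_apply_mem_of_lt_exitTime (by omega)) hjk.symm).2

theorem notMem_cyclePoints_of_mem_chainFrom (ha : a ∉ σ.cyclePoints D)
    (hv : v ∈ σ.chainFrom D a) : v ∉ σ.cyclePoints D := by
  obtain ⟨k, hk, rfl⟩ := mem_chainFrom.1 hv
  intro h
  refine pow_exitTime_apply_notMem ha ?_
  simpa [← mul_apply, ← pow_add, Nat.sub_add_cancel hk] using h (σ.exitTime D a - k)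

theorem mem_or_inv_apply_mem_of_mem_chainFrom (ha : a ∈ D) (hv : v ∈ σ.chainFrom D a) :
    v ∈ D ∨ σ⁻¹ v ∈ D := by
  obtain ⟨k, hk, rfl⟩ := mem_chainFrom.1 hv
  rcases k with _ | k
  · simpa using Or.inl ha
  · right
    rw [← mul_apply, pow_succ', inv_mul_cancel_left]
    exact pow_apply_mem_of_lt_exitTime hk

section Finite

variable [Finite α]

theorem zpow_apply_mem_of_mem_cyclePoints (hx : x ∈ σ.cyclePoints D) (k : ℤ) :
    (σ ^ k) x ∈ D := by
  obtain ⟨t, ht⟩ : σ ^ k ∈ Submonoid.powers σ := mem_powers_iff_mem_zpowers.2 ⟨k, rfl⟩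
  rw [← ht]
  exact hx t

theorem inv_apply_mem_cyclePoints (hx : x ∈ σ.cyclePoints D) : σ⁻¹ x ∈ σ.cyclePoints D :=
  fun k => by simpa [zpow_sub_one] using zpow_apply_mem_of_mem_cyclePoints hx (k - 1)

theorem exists_pos_iterate_eq_of_mem_cyclePoints {f : α → α} (hσ : D.EqOn σ f)
    (hx : x ∈ σ.cyclePoints D) : ∃ m, 0 < m ∧ f^[m] x = x :=
  ⟨orderOf σ, orderOf_pos σ, by
    rw [iterate_eq_pow_apply hσ fun k _ => hx k, pow_orderOf_eq_one, one_apply]⟩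

theorem exists_apply_eq_of_mem_cyclePoints {f : α → α} (hσ : D.EqOn σ f)
    (hx : x ∈ σ.cyclePoints D) : ∃ y ∈ σ.cyclePoints D, f y = x := by
  have hy := inv_apply_mem_cyclePoints hx
  exact ⟨σ⁻¹ x, hy, (hσ (mem_of_mem_cyclePoints hy)).symm.trans (σ.apply_symm_apply x)⟩

theorem notMem_cyclePoints_of_inv_apply_notMem (ha : σ⁻¹ a ∉ D) : a ∉ σ.cyclePoints D :=
  fun h => ha (mem_of_mem_cyclePoints (inv_apply_mem_cyclePoints h))

theorem two_le_length_chainFrom (ha : a ∈ D) (ha' : σ⁻¹ a ∉ D) :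
    2 ≤ (σ.chainFrom D a).length := by
  rw [length_chainFrom, Nat.succ_le_succ_iff]
  exact le_exitTime (notMem_cyclePoints_of_inv_apply_notMem ha') fun i hi => by
    simpa [Nat.lt_one_iff.1 hi] using ha

theorem inv_apply_notMem_cyclePoints_inv (hv : v ∉ σ.cyclePoints D) :
    σ⁻¹ v ∉ σ⁻¹.cyclePoints D := fun h => hv fun k => by
  have hpow : σ⁻¹ ^ (-((k : ℤ) + 1)) * σ⁻¹ = σ ^ k := by group
  simpa only [← mul_apply, hpow] using zpow_apply_mem_of_mem_cyclePoints h (-((k : ℤ) + 1))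

theorem exists_start_of_notMem_cyclePoints (hv : v ∉ σ.cyclePoints D)
    (hvD : v ∈ D ∨ σ⁻¹ v ∈ D) :
    ∃ a k, a ∈ D ∧ σ⁻¹ a ∉ D ∧ (∀ i < k, (σ ^ i) a ∈ D) ∧ (σ ^ k) a = v := by
  -- The start is found by running `σ⁻¹` from `v` until the backward orbit leaves `D`.
  set k := σ⁻¹.exitTime D (σ⁻¹ v)
  have hback : σ⁻¹ ((σ⁻¹ ^ k) v) ∉ D := by
    simpa only [← mul_apply, ← pow_succ', pow_succ] using
      pow_exitTime_apply_notMem (inv_apply_notMem_cyclePoints_inv hv)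
  have hshift : ∀ i ≤ k, (σ ^ i) ((σ⁻¹ ^ k) v) = (σ⁻¹ ^ (k - i)) v := fun i hi => by
    obtain ⟨d, hd⟩ := Nat.exists_eq_add_of_le hi
    rw [hd, Nat.add_sub_cancel_left, ← mul_apply]
    congr 1
    group
  have hmem : ∀ i < k, (σ ^ i) ((σ⁻¹ ^ k) v) ∈ D := fun i hi => by
    rw [hshift i hi.le, show k - i = (k - i - 1) + 1 by omega, pow_succ, mul_apply]
    exact pow_apply_mem_of_lt_exitTime (by omega)
  refine ⟨(σ⁻¹ ^ k) v, k, ?_, hback, hmem, by simp⟩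
  rcases Nat.eq_zero_or_pos k with hk | hk
  · simpa [hk] using hvD.resolve_right (by simpa [hk] using hback)
  · simpa using hmem 0 hk

theorem exists_mem_chainFrom_of_notMem_cyclePoints (hv : v ∉ σ.cyclePoints D)
    (hvD : v ∈ D ∨ σ⁻¹ v ∈ D) : ∃ a, a ∈ D ∧ σ⁻¹ a ∉ D ∧ v ∈ σ.chainFrom D a := by
  obtain ⟨a, k, haD, ha, hk, rfl⟩ := exists_start_of_notMem_cyclePoints hv hvD
  exact ⟨a, haD, ha, mem_chainFrom.2
    ⟨k, le_exitTime (notMem_cyclePoints_of_inv_apply_notMem ha) hk, rfl⟩⟩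

end Finite

end Equiv.Perm

open Equiv.Perm in
theorem stmt9 {n : ℕ} (D : Finset (Fin n)) (f : Fin n → Fin n)
    (hinj : Set.InjOn f (D : Set (Fin n))) :
    ∃ (C : Finset (Fin n)) (chains : Finset (List (Fin n))) (Iso : Finset (Fin n)),
      -- (i) C is the set of elements lying on f-cycles, and f restricts to a
      -- permutation of C
      (∀ i ∈ C, i ∈ D ∧ f i ∈ C) ∧
      (∀ i ∈ C, ∃ m : ℕ, 0 < m ∧ f^[m] i = i) ∧
      (∀ j ∈ C, ∃ i ∈ C, f i = j) ∧
      -- (ii) each chain is a maximal orbit segment a = v₀, f v₀, ..., v_ℓ = b with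
      -- ℓ ≥ 1, starting outside the range and ending outside the domain
      (∀ c ∈ chains, c.Nodup ∧ 2 ≤ c.length ∧
        c.Chain' (fun a b => a ∈ D ∧ f a = b) ∧
        (∀ a, c.head? = some a → a ∉ D.image f) ∧
        (∀ b, c.getLast? = some b → b ∉ D)) ∧
      -- (iii) isolated elements belong to neither the domain nor the range
      (∀ v ∈ Iso, v ∉ D ∧ v ∉ D.image f) ∧
      -- the three parts are pairwise disjoint and cover Fin n
      (∀ c ∈ chains, ∀ v : Fin n, v ∈ c → v ∉ C ∧ v ∉ Iso) ∧
      (∀ v ∈ C, v ∉ Iso) ∧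
      (∀ c ∈ chains, ∀ c' ∈ chains, c ≠ c' → ∀ v : Fin n, v ∈ c → v ∉ c') ∧
      (∀ v : Fin n, v ∈ C ∨ v ∈ Iso ∨ ∃ c ∈ chains, v ∈ c) ∧
      -- counting: |(Fin n \ D) ∪ (Fin n \ R)| = 2p + u
      ((Finset.univ \ D) ∪ (Finset.univ \ D.image f)).card =
        2 * chains.card + Iso.card := by
  classical
  obtain ⟨σ, hσ⟩ := hinj.exists_perm_eqOn
  have hR (v : Fin n) : v ∈ D.image f ↔ σ⁻¹ v ∈ D := mem_image_iff_inv_apply_mem hσ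
  have hchains : #((D \ D.image f).image (σ.chainFrom D)) = #(D \ D.image f) :=
    card_image_of_injOn fun a _ b _ hab => by
      simpa [head?_chainFrom] using congrArg List.head? hab
  set C := univ.filter (· ∈ σ.cyclePoints D)
  have hC (x : Fin n) : x ∈ C ↔ x ∈ σ.cyclePoints D := by simp [C]
  refine ⟨C, (D \ D.image f).image (σ.chainFrom D), (D ∪ D.image f)ᶜ,
    fun i hi => ?_, fun i hi => ?_, fun j hj => ?_, ?_, fun v hv => by simpa using hv, ?_,
    fun v hv hvIso => ?_, ?_, fun v => ?_, ?_⟩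
  · rw [hC] at hi ⊢
    exact ⟨mem_of_mem_cyclePoints hi, apply_mem_cyclePoints hσ hi⟩
  · exact exists_pos_iterate_eq_of_mem_cyclePoints hσ ((hC i).1 hi)
  · simpa only [hC] using exists_apply_eq_of_mem_cyclePoints hσ ((hC j).1 hj)
  · simp only [mem_image, mem_sdiff, hR, forall_exists_index, and_imp]
    rintro _ a haD ha rfl
    refine ⟨nodup_chainFrom ha, two_le_length_chainFrom haD ha, isChain_chainFrom hσ,
      by simpa [head?_chainFrom] using ha, ?_⟩
    simpa [getLast?_chainFrom] using
      pow_exitTime_apply_notMem (notMem_cyclePoints_of_inv_apply_notMem ha)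
  · simp only [mem_image, mem_sdiff, hR, forall_exists_index, and_imp]
    rintro _ a haD ha rfl v hv
    simp only [hC, mem_compl, mem_union, hR, not_or, not_and, not_not]
    exact ⟨notMem_cyclePoints_of_mem_chainFrom (notMem_cyclePoints_of_inv_apply_notMem ha) hv,
      (mem_or_inv_apply_mem_of_mem_chainFrom haD hv).resolve_left⟩
  · exact mem_compl.1 hvIso (mem_union_left _ (mem_of_mem_cyclePoints ((hC v).1 hv)))
  · simp only [mem_image, mem_sdiff, hR, forall_exists_index, and_imp]
    rintro _ a - ha rfl _ b - hb rfl hab v hva hvb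
    exact hab (congrArg _ (eq_of_mem_chainFrom_of_mem_chainFrom ha hb hva hvb))
  · by_cases hv : v ∈ σ.cyclePoints D
    · exact Or.inl ((hC v).2 hv)
    by_cases hvD : v ∈ D ∨ σ⁻¹ v ∈ D
    · obtain ⟨a, haD, ha, hva⟩ := exists_mem_chainFrom_of_notMem_cyclePoints hv hvD
      exact Or.inr (Or.inr ⟨_, mem_image_of_mem _ (by simpa [hR] using ⟨haD, ha⟩), hva⟩)
    · exact Or.inr (Or.inl (by simpa [hR] using hvD))
  · rw [← compl_eq_univ_sdiff, ← compl_eq_univ_sdiff, hchains]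
    exact card_compl_union_compl_of_card_eq (card_image_of_injOn hinj)
end

section
/- Let E be a relation on Fin n and let M be any matching of B(E), with f the associated partial injective function (domain D, range R). Set I = Fin n \ R and J = Fin n \ D. Then the input-augmented bipartite graph (B(E) plus left vertices {u_s : s ∈ I}, each u_s adjacent only to right vertex s) has a matching of size n, and the output-augmented bipartite graph (B(E) plus right vertices {y_s : s ∈ J}, each y_s adjacent only to left vertex s) has a matching of size n. In particular, if f decomposes into cycles, p chains, and u isolated vertices, this produces a feasible input/output placement with |I ∪ J| = 2p + u. -/
def AdjIn {n : ℕ} (E : Fin n → Fin n → Prop) (S : Finset (Fin n)) :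
    (Fin n ⊕ Fin n) → Fin n → Prop := fun a j =>
  match a with
  | Sum.inl i => E i j
  | Sum.inr s => s ∈ S ∧ s = j

def AdjOut {n : ℕ} (E : Fin n → Fin n → Prop) (S : Finset (Fin n)) :
    Fin n → (Fin n ⊕ Fin n) → Prop := fun i b =>
  match b with
  | Sum.inl j => E i j
  | Sum.inr s => s ∈ S ∧ i = s

open Finset

namespace IsBMatching

variable {α β : Type*} [DecidableEq α] [DecidableEq β] {Adj : α → β → Prop}
  {M N : Finset (α × β)}

theorem union (hM : IsBMatching Adj M) (hN : IsBMatching Adj N)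
    (hfst : ∀ p ∈ M, ∀ q ∈ N, p.1 ≠ q.1) (hsnd : ∀ p ∈ M, ∀ q ∈ N, p.2 ≠ q.2) :
    IsBMatching Adj (M ∪ N) := by
  have hdisj : Disjoint (M : Set (α × β)) N :=
    Set.disjoint_left.2 fun p hpM hpN => hfst p hpM p hpN rfl
  refine ⟨fun p hp => (mem_union.1 hp).elim (hM.1 p) (hN.1 p), ?_, ?_⟩
  · have := (Set.injOn_union hdisj).2 ⟨hM.2.1, hN.2.1, hfst⟩
    rw [← coe_union] at this
    exact fun p hp q hq => this hp hq
  · have := (Set.injOn_union hdisj).2 ⟨hM.2.2, hN.2.2, hsnd⟩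
    rw [← coe_union] at this
    exact fun p hp q hq => this hp hq

theorem image_swap (hM : IsBMatching Adj M) : IsBMatching (flip Adj) (M.image Prod.swap) := by
  simp only [IsBMatching, forall_mem_image]
  refine ⟨fun p hp => hM.1 p hp, fun p hp q hq h => ?_, fun p hp q hq h => ?_⟩
  · rw [hM.2.2 p hp q hq h]
  · rw [hM.2.1 p hp q hq h]

end IsBMatching

section Augmentation

variable {n : ℕ} {E : Fin n → Fin n → Prop} {M : Finset (Fin n × Fin n)}

theorem IsBMatching.adjIn_augment (hM : IsBMatching E M) {S : Finset (Fin n)}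
    (hS : Disjoint S (M.image Prod.snd)) :
    IsBMatching (AdjIn E S)
      (M.image (fun p => (Sum.inl p.1, p.2)) ∪ S.image (fun s => (Sum.inr s, s))) := by
  refine IsBMatching.union ?_ ?_ ?_ ?_ <;> simp only [IsBMatching, forall_mem_image]
  · refine ⟨fun p hp => hM.1 p hp, fun p hp q hq h => ?_, fun p hp q hq h => ?_⟩
    · rw [hM.2.1 p hp q hq (Sum.inl_injective h)]
    · rw [hM.2.2 p hp q hq h]
  · exact ⟨fun s hs => ⟨hs, rfl⟩, fun s _ t _ h => by simpa using h,
      fun s _ t _ h => by simpa using h⟩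
  · simp
  · exact fun p hp s hs h => disjoint_left.1 hS hs (h ▸ mem_image_of_mem _ hp)

theorem exists_isBMatching_adjIn_card_eq (hM : IsBMatching E M) :
    ∃ M' : Finset ((Fin n ⊕ Fin n) × Fin n),
      IsBMatching (AdjIn E (univ \ M.image Prod.snd)) M' ∧ M'.card = n := by
  have hS : Disjoint (univ \ M.image Prod.snd) (M.image Prod.snd) := sdiff_disjoint
  refine ⟨_, hM.adjIn_augment hS, ?_⟩
  have hR : (M.image Prod.snd).card = M.card :=
    card_image_of_injOn fun p hp q hq => hM.2.2 p hp q hq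
  have hRn : (M.image Prod.snd).card ≤ n := by simpa using card_le_univ (M.image Prod.snd)
  rw [card_union_of_disjoint, card_image_of_injective, card_image_of_injective,
    card_sdiff_of_subset (subset_univ _), card_univ, Fintype.card_fin]
  · omega
  · exact fun s t h => by simpa using h
  · exact fun p q h => by simpa [Prod.ext_iff] using h
  · simp [disjoint_left]

theorem adjOut_eq_flip_adjIn (S : Finset (Fin n)) : AdjOut E S = flip (AdjIn (flip E) S) := by
  ext i (j | s)
  exacts [Iff.rfl, and_congr_right fun _ => eq_comm]

theorem exists_isBMatching_adjOut_card_eq (hM : IsBMatching E M) :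
    ∃ M' : Finset (Fin n × (Fin n ⊕ Fin n)),
      IsBMatching (AdjOut E (univ \ M.image Prod.fst)) M' ∧ M'.card = n := by
  obtain ⟨M', hM', hcard⟩ := exists_isBMatching_adjIn_card_eq hM.image_swap
  refine ⟨M'.image Prod.swap, ?_, by rw [card_image_of_injective _ Prod.swap_injective, hcard]⟩
  rw [image_image] at hM'
  rw [adjOut_eq_flip_adjIn]
  exact hM'.image_swap

end Augmentation

namespace List.IsChain

variable {α : Type*} {r : α → α → Prop} {l : List α}

theorem exists_rel_of_mem_of_head?_ne (hl : l.IsChain r) {v : α} (hv : v ∈ l)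
    (hne : l.head? ≠ some v) : ∃ u, r u v := by
  induction l with
  | nil => simp at hv
  | cons a t ih =>
    cases t with
    | nil => simp_all
    | cons b t =>
      rw [isChain_cons_cons] at hl
      rcases mem_cons.1 hv with rfl | hv
      · simp at hne
      · by_cases hb : v = b
        · exact ⟨a, hb ▸ hl.1⟩
        · exact ih hl.2 hv (by simpa [eq_comm] using hb)

theorem exists_rel_of_head?_eq (hl : l.IsChain r) (hlen : 2 ≤ l.length) {a : α}
    (ha : l.head? = some a) : ∃ b, r a b := by
  match l, hl, hlen, ha with
  | _ :: b :: _, hl, _, rfl => exact ⟨b, (isChain_cons_cons.1 hl).1⟩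

end List.IsChain

section ChainCover

variable {α : Type*} [DecidableEq α] {r : α → α → Prop} {C Iso : Finset α}
  {chains : Finset (List α)}

theorem card_eq_card_add_card_of_chain_cover_head {S : Finset α}
    (hS : ∀ v ∈ S, ∀ u, ¬ r u v) (hC : ∀ v ∈ C, ∃ u, r u v)
    (hchain : ∀ c ∈ chains, c ≠ [] ∧ c.IsChain r)
    (hhead : ∀ c ∈ chains, ∀ a, c.head? = some a → a ∈ S) (hIso : Iso ⊆ S)
    (hchainIso : ∀ c ∈ chains, ∀ v ∈ c, v ∉ Iso)
    (hdisj : ∀ c ∈ chains, ∀ c' ∈ chains, c ≠ c' → ∀ v ∈ c, v ∉ c')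
    (hcover : ∀ v, v ∈ C ∨ v ∈ Iso ∨ ∃ c ∈ chains, v ∈ c) :
    S.card = Iso.card + chains.card := by
  have hheads : chains.card = (S \ Iso).card := by
    refine card_bij (fun c hc => c.head (hchain c hc).1) (fun c hc => ?_)
      (fun c hc c' hc' h => ?_) ?_
    · exact mem_sdiff.2 ⟨hhead c hc _ (List.head?_eq_some_head _),
        hchainIso c hc _ (List.head_mem _)⟩
    · by_contra hne
      exact hdisj c hc c' hc' hne _ (List.head_mem _) (h ▸ List.head_mem (hchain c' hc').1)
    · intro v hv
      obtain ⟨hvS, hvIso⟩ := mem_sdiff.1 hv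
      rcases hcover v with hvC | hvIso' | ⟨c, hc, hvc⟩
      · obtain ⟨u, hu⟩ := hC v hvC
        exact absurd hu (hS v hvS u)
      · exact absurd hvIso' hvIso
      · by_cases hhd : c.head? = some v
        · exact ⟨c, hc, Option.some_injective _ ((List.head?_eq_some_head _).symm.trans hhd)⟩
        · obtain ⟨u, hu⟩ := (hchain c hc).2.exists_rel_of_mem_of_head?_ne hvc hhd
          exact absurd hu (hS v hvS u)
  rw [hheads, card_sdiff_of_subset hIso]
  have := card_le_card hIso
  omega

theorem card_eq_card_add_card_of_chain_cover_getLast {T : Finset α}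
    (hT : ∀ v ∈ T, ∀ w, ¬ r v w) (hC : ∀ v ∈ C, ∃ w, r v w)
    (hchain : ∀ c ∈ chains, c ≠ [] ∧ c.IsChain r)
    (hlast : ∀ c ∈ chains, ∀ b, c.getLast? = some b → b ∈ T) (hIso : Iso ⊆ T)
    (hchainIso : ∀ c ∈ chains, ∀ v ∈ c, v ∉ Iso)
    (hdisj : ∀ c ∈ chains, ∀ c' ∈ chains, c ≠ c' → ∀ v ∈ c, v ∉ c')
    (hcover : ∀ v, v ∈ C ∨ v ∈ Iso ∨ ∃ c ∈ chains, v ∈ c) :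
    T.card = Iso.card + chains.card := by
  rw [← card_image_of_injective chains List.reverse_injective]
  refine card_eq_card_add_card_of_chain_cover_head (r := flip r) hT hC ?_ ?_ hIso ?_ ?_ ?_ <;>
    simp only [forall_mem_image, exists_mem_image, List.mem_reverse]
  · exact fun c hc => ⟨List.reverse_ne_nil_iff.2 (hchain c hc).1,
      List.isChain_reverse.2 (hchain c hc).2⟩
  · simpa only [List.head?_reverse] using hlast
  · exact hchainIso
  · exact fun c hc c' hc' hne => hdisj c hc c' hc' (mt (congrArg List.reverse) hne)
  · exact hcover

theorem inter_eq_of_chain_cover {S T : Finset α} (hS : ∀ v ∈ S, ∀ u, ¬ r u v)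
    (hT : ∀ v ∈ T, ∀ w, ¬ r v w) (hC : ∀ v ∈ C, ∃ u, r u v)
    (hchain : ∀ c ∈ chains, 2 ≤ c.length ∧ c.IsChain r) (hIso : Iso ⊆ S ∩ T)
    (hcover : ∀ v, v ∈ C ∨ v ∈ Iso ∨ ∃ c ∈ chains, v ∈ c) :
    S ∩ T = Iso := by
  refine Subset.antisymm (fun v hv => ?_) hIso
  obtain ⟨hvS, hvT⟩ := mem_inter.1 hv
  rcases hcover v with hvC | hvIso | ⟨c, hc, hvc⟩
  · obtain ⟨u, hu⟩ := hC v hvC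
    exact absurd hu (hS v hvS u)
  · exact hvIso
  · by_cases hhd : c.head? = some v
    · obtain ⟨w, hw⟩ := (hchain c hc).2.exists_rel_of_head?_eq (hchain c hc).1 hhd
      exact absurd hw (hT v hvT w)
    · obtain ⟨u, hu⟩ := (hchain c hc).2.exists_rel_of_mem_of_head?_ne hvc hhd
      exact absurd hu (hS v hvS u)

end ChainCover

theorem stmt10 {n : ℕ} (E : Fin n → Fin n → Prop) (M : Finset (Fin n × Fin n))
    (hM : IsBMatching E M)
    (D R I J : Finset (Fin n))
    (hD : D = M.image Prod.fst) (hR : R = M.image Prod.snd)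
    (hI : I = Finset.univ \ R) (hJ : J = Finset.univ \ D) :
    (∃ M' : Finset ((Fin n ⊕ Fin n) × Fin n), IsBMatching (AdjIn E I) M' ∧ M'.card = n) ∧
    (∃ M' : Finset (Fin n × (Fin n ⊕ Fin n)), IsBMatching (AdjOut E J) M' ∧ M'.card = n) ∧
    -- if the partial injective function associated with M decomposes into cycles,
    -- p chains, and u isolated vertices, then |I ∪ J| = 2p + u
    (∀ (C : Finset (Fin n)) (chains : Finset (List (Fin n))) (Iso : Finset (Fin n)),
      (∀ i ∈ C, ∃ j ∈ C, (i, j) ∈ M) →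
      (∀ j ∈ C, ∃ i ∈ C, (i, j) ∈ M) →
      (∀ c ∈ chains, c.Nodup ∧ 2 ≤ c.length ∧
        c.Chain' (fun a b => (a, b) ∈ M) ∧
        (∀ a, c.head? = some a → a ∉ R) ∧
        (∀ b, c.getLast? = some b → b ∉ D)) →
      (∀ v ∈ Iso, v ∉ D ∧ v ∉ R) →
      (∀ c ∈ chains, ∀ v : Fin n, v ∈ c → v ∉ C ∧ v ∉ Iso) →
      (∀ v ∈ C, v ∉ Iso) →
      (∀ c ∈ chains, ∀ c' ∈ chains, c ≠ c' → ∀ v : Fin n, v ∈ c → v ∉ c') →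
      (∀ v : Fin n, v ∈ C ∨ v ∈ Iso ∨ ∃ c ∈ chains, v ∈ c) →
      (I ∪ J).card = 2 * chains.card + Iso.card) := by
  subst hD hR hI hJ
  refine ⟨exists_isBMatching_adjIn_card_eq hM, exists_isBMatching_adjOut_card_eq hM, ?_⟩
  intro C chains Iso hCout hCin hchains hIso hchainIso _ hdisj hcover
  have hsrc : ∀ v ∈ univ \ M.image Prod.snd, ∀ u, (u, v) ∉ M := fun v hv u huv =>
    (mem_sdiff.1 hv).2 (mem_image_of_mem Prod.snd huv)
  have hsnk : ∀ v ∈ univ \ M.image Prod.fst, ∀ w, (v, w) ∉ M := fun v hv w hvw =>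
    (mem_sdiff.1 hv).2 (mem_image_of_mem Prod.fst hvw)
  have hne : ∀ c ∈ chains, c ≠ [] := fun c hc =>
    List.ne_nil_of_length_pos (zero_lt_two.trans_le (hchains c hc).2.1)
  have hI : (univ \ M.image Prod.snd).card = Iso.card + chains.card :=
    card_eq_card_add_card_of_chain_cover_head hsrc (fun v hv => (hCin v hv).imp fun _ h => h.2)
      (fun c hc => ⟨hne c hc, (hchains c hc).2.2.1⟩)
      (fun c hc a ha => by simpa using (hchains c hc).2.2.2.1 a ha)
      (fun v hv => by simpa using (hIso v hv).2) (fun c hc v hv => (hchainIso c hc v hv).2)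
      hdisj hcover
  have hJ : (univ \ M.image Prod.fst).card = Iso.card + chains.card :=
    card_eq_card_add_card_of_chain_cover_getLast hsnk
      (fun v hv => (hCout v hv).imp fun _ h => h.2)
      (fun c hc => ⟨hne c hc, (hchains c hc).2.2.1⟩)
      (fun c hc b hb => by simpa using (hchains c hc).2.2.2.2 b hb)
      (fun v hv => by simpa using (hIso v hv).1) (fun c hc v hv => (hchainIso c hc v hv).2)
      hdisj hcover
  have hIJ := inter_eq_of_chain_cover hsrc hsnk (fun v hv => (hCin v hv).imp fun _ h => h.2)
    (fun c hc => ⟨(hchains c hc).2.1, (hchains c hc).2.2.1⟩)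
    (fun v hv => by simpa using (hIso v hv).symm) hcover
  have := card_union_add_card_inter (univ \ M.image Prod.snd) (univ \ M.image Prod.fst)
  rw [hIJ] at this
  omega
end

section
/- Let G be a bipartite graph and let M1 and M2 be two matchings of G. Then there exists a matching M ⊆ M1 ∪ M2 that covers every right vertex covered by M1 and every left vertex covered by M2. -/
lemma subMatching {L R : Type*} (Adj : L → R → Prop) {M M' : Finset (L × R)}
    (hsub : M' ⊆ M) (hM : IsBMatching Adj M) : IsBMatching Adj M' :=
  ⟨fun p hp => hM.1 p (hsub hp),
   fun p hp q hq => hM.2.1 p (hsub hp) q (hsub hq),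
   fun p hp q hq => hM.2.2 p (hsub hp) q (hsub hq)⟩

lemma insertMatching {L R : Type*} [DecidableEq L] [DecidableEq R]
    (Adj : L → R → Prop) {M : Finset (L × R)} {p : L × R}
    (hM : IsBMatching Adj M) (hadj : Adj p.1 p.2)
    (hL : ∀ q ∈ M, q.1 ≠ p.1) (hR : ∀ q ∈ M, q.2 ≠ p.2) :
    IsBMatching Adj (insert p M) := by
  refine ⟨?_, ?_, ?_⟩
  · intro x hx
    rcases Finset.mem_insert.mp hx with h | h
    · rw [h]; exact hadj
    · exact hM.1 x h
  · intro x hx y hy hxy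
    rcases Finset.mem_insert.mp hx with h | h <;> rcases Finset.mem_insert.mp hy with h' | h'
    · rw [h, h']
    · exact absurd (hxy.symm.trans (congrArg Prod.fst h)) (hL y h')
    · exact absurd (hxy.trans (congrArg Prod.fst h')) (hL x h)
    · exact hM.2.1 x h y h' hxy
  · intro x hx y hy hxy
    rcases Finset.mem_insert.mp hx with h | h <;> rcases Finset.mem_insert.mp hy with h' | h'
    · rw [h, h']
    · exact absurd (hxy.symm.trans (congrArg Prod.snd h)) (hR y h')
    · exact absurd (hxy.trans (congrArg Prod.snd h')) (hR x h)
    · exact hM.2.2 x h y h' hxy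

lemma aux11 {L R : Type*} [DecidableEq L] [DecidableEq R]
    (Adj : L → R → Prop) (M1 M2 : Finset (L × R))
    (h1 : IsBMatching Adj M1) (h2 : IsBMatching Adj M2) :
    ∀ n : ℕ, ∀ M : Finset (L × R), (M ∩ M2).card ≤ n → M ⊆ M1 ∪ M2 →
      IsBMatching Adj M → ∀ p ∈ M1, (∀ q ∈ M, q.2 ≠ p.2) →
      ∃ M' : Finset (L × R), M' ⊆ M1 ∪ M2 ∧ IsBMatching Adj M' ∧
        (∃ e ∈ M', e.2 = p.2) ∧
        (∀ r : R, (∃ e ∈ M1, e.2 = r) → (∃ e ∈ M, e.2 = r) → ∃ e ∈ M', e.2 = r) ∧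
        (∀ l : L, (∃ e ∈ M, e.1 = l) → ∃ e ∈ M', e.1 = l) := by
  intro n
  induction n with
  | zero =>
    intro M hcard hsub hM p hp hunc
    by_cases hc : ∃ q ∈ M, q.1 = p.1
    · obtain ⟨q, hqM, hq1⟩ := hc
      have hqM2 : q ∈ M2 := by
        rcases Finset.mem_union.mp (hsub hqM) with h | h
        · exact absurd (h1.2.1 q h p hp hq1) (fun he => hunc q hqM (congrArg Prod.snd he))
        · exact h
      have hmem : q ∈ M ∩ M2 := Finset.mem_inter.mpr ⟨hqM, hqM2⟩
      have := Finset.card_pos.mpr ⟨q, hmem⟩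
      omega
    · refine ⟨insert p M, ?_, insertMatching Adj hM (h1.1 p hp)
        (fun q hq hq1 => hc ⟨q, hq, hq1⟩) hunc,
        ⟨p, Finset.mem_insert_self _ _, rfl⟩, ?_, ?_⟩
      · intro x hx
        rcases Finset.mem_insert.mp hx with h | h
        · rw [h]; exact Finset.mem_union_left _ hp
        · exact hsub h
      · rintro r _ ⟨e, heM, he⟩
        exact ⟨e, Finset.mem_insert_of_mem heM, he⟩
      · rintro l ⟨e, heM, he⟩
        exact ⟨e, Finset.mem_insert_of_mem heM, he⟩
  | succ n ih =>
    intro M hcard hsub hM p hp hunc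
    by_cases hc : ∃ q ∈ M, q.1 = p.1
    swap
    · refine ⟨insert p M, ?_, insertMatching Adj hM (h1.1 p hp)
        (fun q hq hq1 => hc ⟨q, hq, hq1⟩) hunc,
        ⟨p, Finset.mem_insert_self _ _, rfl⟩, ?_, ?_⟩
      · intro x hx
        rcases Finset.mem_insert.mp hx with h | h
        · rw [h]; exact Finset.mem_union_left _ hp
        · exact hsub h
      · rintro r _ ⟨e, heM, he⟩
        exact ⟨e, Finset.mem_insert_of_mem heM, he⟩
      · rintro l ⟨e, heM, he⟩
        exact ⟨e, Finset.mem_insert_of_mem heM, he⟩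
    · obtain ⟨q, hqM, hq1⟩ := hc
      have hqnp : q.2 ≠ p.2 := hunc q hqM
      have hqM2 : q ∈ M2 := by
        rcases Finset.mem_union.mp (hsub hqM) with h | h
        · exact absurd (h1.2.1 q h p hp hq1) (fun he => hqnp (congrArg Prod.snd he))
        · exact h
      have hpM2 : p ∉ M2 := fun hpM2 =>
        hqnp (congrArg Prod.snd (h2.2.1 q hqM2 p hpM2 hq1))
      have hsub'' : insert p (M.erase q) ⊆ M1 ∪ M2 := by
        intro x hx
        rcases Finset.mem_insert.mp hx with h | h
        · rw [h]; exact Finset.mem_union_left _ hp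
        · exact hsub (Finset.mem_of_mem_erase h)
      have hmatch'' : IsBMatching Adj (insert p (M.erase q)) := by
        refine insertMatching Adj (subMatching Adj (Finset.erase_subset q M) hM)
          (h1.1 p hp) ?_ (fun x hx => hunc x (Finset.mem_of_mem_erase hx))
        intro x hx hx1
        exact Finset.ne_of_mem_erase hx
          (hM.2.1 x (Finset.mem_of_mem_erase hx) q hqM (hx1.trans hq1.symm))
      have hcov_right'' : ∀ r : R, r ≠ q.2 → (∃ e ∈ M, e.2 = r) →
          ∃ e ∈ insert p (M.erase q), e.2 = r := by
        rintro r hr ⟨e, heM, he⟩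
        refine ⟨e, Finset.mem_insert_of_mem (Finset.mem_erase.mpr ⟨?_, heM⟩), he⟩
        intro heq
        exact hr (he.symm.trans (congrArg Prod.snd heq))
      have hcov_left'' : ∀ l : L, (∃ e ∈ M, e.1 = l) →
          ∃ e ∈ insert p (M.erase q), e.1 = l := by
        rintro l ⟨e, heM, he⟩
        by_cases heq : e = q
        · exact ⟨p, Finset.mem_insert_self _ _,
            hq1.symm.trans ((congrArg Prod.fst heq).symm.trans he)⟩
        · exact ⟨e, Finset.mem_insert_of_mem (Finset.mem_erase.mpr ⟨heq, heM⟩), he⟩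
      have hpcov'' : ∃ e ∈ insert p (M.erase q), e.2 = p.2 :=
        ⟨p, Finset.mem_insert_self _ _, rfl⟩
      by_cases hq2 : ∃ p' ∈ M1, p'.2 = q.2
      · obtain ⟨p', hp'M1, hp'2⟩ := hq2
        have hcard'' : (insert p (M.erase q) ∩ M2).card ≤ n := by
          have hsubE : insert p (M.erase q) ∩ M2 ⊆ (M ∩ M2).erase q := by
            intro x hx
            obtain ⟨hx1, hx2⟩ := Finset.mem_inter.mp hx
            rcases Finset.mem_insert.mp hx1 with h | h
            · exact absurd (h ▸ hx2) hpM2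
            · exact Finset.mem_erase.mpr ⟨Finset.ne_of_mem_erase h,
                Finset.mem_inter.mpr ⟨Finset.mem_of_mem_erase h, hx2⟩⟩
          have hqmem : q ∈ M ∩ M2 := Finset.mem_inter.mpr ⟨hqM, hqM2⟩
          have h3 := Finset.card_le_card hsubE
          have h4 := Finset.card_erase_of_mem hqmem
          have h5 := Finset.card_pos.mpr ⟨q, hqmem⟩
          omega
        have hunc'' : ∀ e ∈ insert p (M.erase q), e.2 ≠ p'.2 := by
          intro e he heq
          rw [hp'2] at heq
          rcases Finset.mem_insert.mp he with h | h
          · exact hqnp (heq.symm.trans (congrArg Prod.snd h))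
          · exact Finset.ne_of_mem_erase h
              (hM.2.2 e (Finset.mem_of_mem_erase h) q hqM heq)
        obtain ⟨M''', hsub''', hmatch''', hcovp''', hcovr''', hcovl'''⟩ :=
          ih (insert p (M.erase q)) hcard'' hsub'' hmatch'' p' hp'M1 hunc''
        refine ⟨M''', hsub''', hmatch''', ?_, ?_, ?_⟩
        · exact hcovr''' p.2 ⟨p, hp, rfl⟩ hpcov''
        · rintro r hr1 ⟨e, heM, he⟩
          by_cases heq : r = q.2
          · subst heq
            rw [hp'2] at hcovp'''
            exact hcovp'''
          · exact hcovr''' r hr1 (hcov_right'' r heq ⟨e, heM, he⟩)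
        · intro l hl
          exact hcovl''' l (hcov_left'' l hl)
      · refine ⟨insert p (M.erase q), hsub'', hmatch'', hpcov'', ?_, hcov_left''⟩
        intro r hr1 hr
        refine hcov_right'' r ?_ hr
        intro heq
        subst heq
        exact hq2 hr1

theorem stmt11 {L R : Type*} [DecidableEq L] [DecidableEq R]
    (Adj : L → R → Prop) (M1 M2 : Finset (L × R))
    (h1 : IsBMatching Adj M1) (h2 : IsBMatching Adj M2) :
    ∃ M : Finset (L × R), M ⊆ M1 ∪ M2 ∧ IsBMatching Adj M ∧
      (∀ r : R, (∃ p ∈ M1, p.2 = r) → ∃ p ∈ M, p.2 = r) ∧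
      (∀ l : L, (∃ p ∈ M2, p.1 = l) → ∃ p ∈ M, p.1 = l) := by
  revert h1
  induction M1 using Finset.induction_on with
  | empty =>
    intro _
    refine ⟨M2, Finset.subset_union_right, h2, ?_, ?_⟩
    · rintro r ⟨p, hp, _⟩
      exact absurd hp (Finset.notMem_empty p)
    · intro l hl; exact hl
  | @insert a s hans ih =>
    intro h1'
    obtain ⟨M, hsub, hM, hcovr, hcovl⟩ :=
      ih (subMatching Adj (Finset.subset_insert a s) h1')
    have hsub' : M ⊆ insert a s ∪ M2 := hsub.trans
      (Finset.union_subset_union_left (Finset.subset_insert a s))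
    by_cases hcov : ∃ e ∈ M, e.2 = a.2
    · refine ⟨M, hsub', hM, ?_, hcovl⟩
      rintro r ⟨p, hp, rfl⟩
      rcases Finset.mem_insert.mp hp with h | h
      · rw [congrArg Prod.snd h]; exact hcov
      · exact hcovr p.2 ⟨p, h, rfl⟩
    · have hunc : ∀ q ∈ M, q.2 ≠ a.2 := fun q hq he => hcov ⟨q, hq, he⟩
      obtain ⟨M', hsub'', hmatch', hcovp', hcovr', hcovl'⟩ :=
        aux11 Adj (insert a s) M2 h1' h2 (M ∩ M2).card M le_rfl hsub' hM a
          (Finset.mem_insert_self a s) hunc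
      refine ⟨M', hsub'', hmatch', ?_, ?_⟩
      · rintro r ⟨p, hp, rfl⟩
        rcases Finset.mem_insert.mp hp with h | h
        · rw [congrArg Prod.snd h]; exact hcovp'
        · exact hcovr' p.2 ⟨p, Finset.mem_insert_of_mem h, rfl⟩ (hcovr p.2 ⟨p, h, rfl⟩)
      · intro l hl
        exact hcovl' l (hcovl l hl)
end

section
/- Let E be a relation on Fin n and let M be a perfect matching of H(E) whose set of dynamics edges is nonempty or whose input-used set I* = {i : (inr i, inl i) ∈ M} is nonempty. Define I* and J* = {i : (inl i, inr i) ∈ M}. Then taking the dedicated input index set I* and dedicated output index set J*: the input-augmented bipartite graph over B(E) with extra left vertices {u_s : s ∈ I*} (u_s adjacent only to right vertex s) has a matching of size n, and the output-augmented graph with extra right vertices {y_s : s ∈ J*} (y_s adjacent only to left vertex s) has a matching of size n; moreover I* = J*, so |I* ∪ J*| = |I*| = n − k where k is the number of dynamics edges of M. -/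
theorem stmt16 {n : ℕ} (E : Fin n → Fin n → Prop)
    (M : Finset ((Fin n ⊕ Fin n) × (Fin n ⊕ Fin n)))
    (hM : IsPerfectMatchingH E M)
    (Istar Jstar : Finset (Fin n))
    (hI : Istar = Finset.univ.filter (fun i => (Sum.inr i, Sum.inl i) ∈ M))
    (hJ : Jstar = Finset.univ.filter (fun i => (Sum.inl i, Sum.inr i) ∈ M))
    (hne : (M.filter (fun p => isDyn p = true)).Nonempty ∨ Istar.Nonempty) :
    (∃ M' : Finset ((Fin n ⊕ Fin n) × Fin n),
      IsBMatching (AdjIn E Istar) M' ∧ M'.card = n) ∧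
    (∃ M' : Finset (Fin n × (Fin n ⊕ Fin n)),
      IsBMatching (AdjOut E Jstar) M' ∧ M'.card = n) ∧
    Istar = Jstar ∧
    (Istar ∪ Jstar).card = Istar.card ∧
    Istar.card = n - (M.filter (fun p => isDyn p = true)).card := by
  classical
  obtain ⟨⟨hadj, hlu, hru⟩, hcovL, hcovR⟩ := hM
  -- for each right vertex `inl j`, a matched left endpoint
  have hlfE : ∀ j : Fin n, ∃ a, (a, Sum.inl j) ∈ M := by
    intro j
    obtain ⟨p, hp, h2⟩ := hcovR (Sum.inl j)
    refine ⟨p.1, ?_⟩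
    rw [← h2]; exact hp
  choose lf hlf using hlfE
  -- for each left vertex `inl i`, a matched right endpoint
  have hrfE : ∀ i : Fin n, ∃ b, (Sum.inl i, b) ∈ M := by
    intro i
    obtain ⟨p, hp, h1⟩ := hcovL (Sum.inl i)
    refine ⟨p.2, ?_⟩
    rw [← h1]; exact hp
  choose rf hrf using hrfE
  have fact1 : ∀ i : Fin n, (Sum.inr i, Sum.inl i) ∈ M → (Sum.inl i, Sum.inr i) ∈ M := by
    intro i h
    obtain ⟨p, hp, h2⟩ := hcovR (Sum.inr i)
    obtain ⟨a, b⟩ := p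
    simp only at h2; subst h2
    have ha := hadj _ hp
    cases a with
    | inl a =>
      have : a = i := ha
      subst this; exact hp
    | inr a =>
      have : a = i := ha
      subst this
      have := hlu _ hp _ h rfl
      simp at this
  have fact2 : ∀ i : Fin n, (Sum.inl i, Sum.inr i) ∈ M → (Sum.inr i, Sum.inl i) ∈ M := by
    intro i h
    obtain ⟨p, hp, h1⟩ := hcovL (Sum.inr i)
    obtain ⟨a, b⟩ := p
    simp only at h1; subst h1
    have ha := hadj _ hp
    cases b with
    | inl b =>
      have : i = b := ha
      subst this; exact hp
    | inr b =>
      have : i = b := ha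
      subst this
      have := hru _ hp _ h rfl
      simp at this
  have hIJ : Istar = Jstar := by
    ext i
    rw [hI, hJ]
    simp only [Finset.mem_filter, Finset.mem_univ, true_and]
    exact ⟨fact1 i, fact2 i⟩
  have hsub : Jstar ⊆ Finset.univ := Finset.subset_univ _
  have hset : M.filter (fun p => isDyn p = true)
      = (Finset.univ \ Jstar).image (fun i => (Sum.inl i, rf i)) := by
    ext p
    simp only [Finset.mem_filter, Finset.mem_image, Finset.mem_sdiff, Finset.mem_univ, true_and]
    constructor
    · rintro ⟨hp, hd⟩
      obtain ⟨a | a, b | b⟩ := p <;> simp [isDyn] at hd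
      refine ⟨a, ?_, ?_⟩
      · rw [hJ]
        simp only [Finset.mem_filter, Finset.mem_univ, true_and]
        intro hc
        have := hlu _ hp _ hc rfl
        simp at this
      · have := hlu _ hp _ (hrf a) rfl
        rw [← this]
    · rintro ⟨a, ha, rfl⟩
      refine ⟨hrf a, ?_⟩
      rcases hq : rf a with b | b
      · rfl
      · exfalso
        have hb := hadj _ (hrf a)
        rw [hq] at hb
        have : a = b := hb
        subst this
        have hm := hrf a
        rw [hq] at hm
        apply ha
        rw [hJ]
        simp only [Finset.mem_filter, Finset.mem_univ, true_and]
        exact hm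
  have injrf : Function.Injective (fun i : Fin n => ((Sum.inl i, rf i) : (Fin n ⊕ Fin n) × (Fin n ⊕ Fin n))) := by
    intro a b h
    simpa using congrArg Prod.fst h
  have hk : (M.filter (fun p => isDyn p = true)).card = n - Jstar.card := by
    rw [hset, Finset.card_image_of_injective _ injrf, Finset.card_sdiff_of_subset hsub,
      Finset.card_univ, Fintype.card_fin]
  have hJcard : Jstar.card ≤ n := by
    calc Jstar.card ≤ Finset.univ.card := Finset.card_le_card hsub
    _ = n := by simp
  refine ⟨?_, ?_, hIJ, by rw [hIJ, Finset.union_self], by rw [hIJ, hk]; omega⟩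
  · -- input matching
    refine ⟨Finset.univ.image (fun j => (lf j, j)), ⟨?_, ?_, ?_⟩, ?_⟩
    · intro p hp
      simp only [Finset.mem_image, Finset.mem_univ, true_and] at hp
      obtain ⟨j, rfl⟩ := hp
      have hm := hlf j
      have ha := hadj _ hm
      rcases hq : lf j with a | a <;> rw [hq] at ha hm
      · exact ha
      · have : a = j := ha
        subst this
        refine ⟨?_, rfl⟩
        rw [hI]
        simp only [Finset.mem_filter, Finset.mem_univ, true_and]
        exact hm
    · intro p hp q hq h
      simp only [Finset.mem_image, Finset.mem_univ, true_and] at hp hq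
      obtain ⟨j, rfl⟩ := hp
      obtain ⟨j', rfl⟩ := hq
      simp only at h
      have := hlu _ (hlf j) _ (hlf j') h
      simp only [Prod.mk.injEq, Sum.inl.injEq] at this
      obtain ⟨h1, rfl⟩ := this
      rfl
    · intro p hp q hq h
      simp only [Finset.mem_image, Finset.mem_univ, true_and] at hp hq
      obtain ⟨j, rfl⟩ := hp
      obtain ⟨j', rfl⟩ := hq
      simp only at h
      subst h
      rfl
    · rw [Finset.card_image_of_injective _ (fun a b h => by simpa using congrArg Prod.snd h),
        Finset.card_univ, Fintype.card_fin]
  · -- output matching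
    refine ⟨Finset.univ.image (fun i => (i, rf i)), ⟨?_, ?_, ?_⟩, ?_⟩
    · intro p hp
      simp only [Finset.mem_image, Finset.mem_univ, true_and] at hp
      obtain ⟨i, rfl⟩ := hp
      have hm := hrf i
      have ha := hadj _ hm
      rcases hq : rf i with b | b <;> rw [hq] at ha hm
      · exact ha
      · have : i = b := ha
        subst this
        refine ⟨?_, rfl⟩
        rw [hJ]
        simp only [Finset.mem_filter, Finset.mem_univ, true_and]
        exact hm
    · intro p hp q hq h
      simp only [Finset.mem_image, Finset.mem_univ, true_and] at hp hq
      obtain ⟨i, rfl⟩ := hp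
      obtain ⟨i', rfl⟩ := hq
      simp only at h
      subst h
      rfl
    · intro p hp q hq h
      simp only [Finset.mem_image, Finset.mem_univ, true_and] at hp hq
      obtain ⟨i, rfl⟩ := hp
      obtain ⟨i', rfl⟩ := hq
      simp only at h
      have := hru _ (hrf i) _ (hrf i') h
      simp only [Prod.mk.injEq, Sum.inl.injEq] at this
      obtain ⟨rfl, h2⟩ := this
      rfl
    · rw [Finset.card_image_of_injective _ (fun a b h => by simpa using congrArg Prod.fst h),
        Finset.card_univ, Fintype.card_fin]
end
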